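/- arXiv:1608.05847 — 2 statements merged into one kernel-verified Lean document; each statement's English description precedes it below -/
import Mathlib

section
/- For every ε > 0 there exists δ > 0 such that the following holds. Let A be a unital C*-algebra and let z, z₀, c, g₀, g₁ ∈ A satisfy: (1) 0 ≤ g₁ ≤ g₀ ≤ 1; (2) g₀ g₁ = g₁; (3) ‖z‖ ≤ 1, ‖z₀‖ ≤ 1, ‖c‖ ≤ 1; (4) ‖[c, g₀]‖ < δ and ‖[c, g₁]‖ < δ; (5) ‖[z₀, (1 − g₁) c]‖ < δ; (6) ‖[z₀, g₀]‖ < δ; (7) ‖z − (1 − g₀)^{1/2} z₀ (1 − g₀)^{1/2}‖ < δ. Then ‖[z, c]‖ < ε. -/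
open Polynomial Finset

set_option maxHeartbeats 2000000

lemma comm_pow_bound {A : Type} [NormedRing A] (a b : A) (ha : ‖a‖ ≤ 1) (n : ℕ) :
    ‖a ^ n * b - b * a ^ n‖ ≤ n * ‖a * b - b * a‖ := by
  induction n with
  | zero => simp
  | succ n ih =>
    have key : a ^ (n + 1) * b - b * a ^ (n + 1)
        = a ^ n * (a * b - b * a) + (a ^ n * b - b * a ^ n) * a := by
      rw [pow_succ]; noncomm_ring
    have h1 : ‖a ^ n * (a * b - b * a)‖ ≤ ‖a * b - b * a‖ := by
      rcases Nat.eq_zero_or_pos n with rfl | hn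
      · simp
      · refine (norm_mul_le _ _).trans ?_
        have : ‖a ^ n‖ ≤ 1 := (norm_pow_le' a hn).trans (pow_le_one₀ (norm_nonneg a) ha)
        calc ‖a ^ n‖ * ‖a * b - b * a‖ ≤ 1 * ‖a * b - b * a‖ :=
              mul_le_mul_of_nonneg_right this (norm_nonneg _)
          _ = _ := one_mul _
    have h3 : ‖(a ^ n * b - b * a ^ n) * a‖ ≤ (n * ‖a * b - b * a‖) * 1 :=
      (norm_mul_le _ _).trans (mul_le_mul ih ha (norm_nonneg _)
        (by positivity))
    calc ‖a ^ (n + 1) * b - b * a ^ (n + 1)‖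
        ≤ ‖a ^ n * (a * b - b * a)‖ + ‖(a ^ n * b - b * a ^ n) * a‖ := by rw [key]; exact norm_add_le _ _
      _ ≤ ‖a * b - b * a‖ + (n * ‖a * b - b * a‖) * 1 := add_le_add h1 h3
      _ = (n + 1 : ℕ) * ‖a * b - b * a‖ := by push_cast; ring

lemma comm_aeval_bound {A : Type} [NormedRing A] [NormedAlgebra ℝ A]
    (p : ℝ[X]) (a b : A) (ha : ‖a‖ ≤ 1) :
    ‖(aeval a) p * b - b * (aeval a) p‖
      ≤ (∑ i ∈ range (p.natDegree + 1), |p.coeff i| * i) * ‖a * b - b * a‖ := by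
  rw [Polynomial.aeval_eq_sum_range]
  have key : (∑ i ∈ range (p.natDegree + 1), p.coeff i • a ^ i) * b
      - b * (∑ i ∈ range (p.natDegree + 1), p.coeff i • a ^ i)
      = ∑ i ∈ range (p.natDegree + 1), p.coeff i • (a ^ i * b - b * a ^ i) := by
    rw [Finset.sum_mul, Finset.mul_sum, ← Finset.sum_sub_distrib]
    exact Finset.sum_congr rfl fun i _ => by
      rw [smul_mul_assoc, mul_smul_comm, smul_sub]
  rw [key, Finset.sum_mul]
  refine (norm_sum_le _ _).trans (Finset.sum_le_sum fun i _ => ?_)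
  rw [norm_smul, Real.norm_eq_abs, mul_assoc]
  exact mul_le_mul_of_nonneg_left (comm_pow_bound a b ha i) (abs_nonneg _)

lemma sqrt_comm_bound (η : ℝ) (hη : 0 < η) :
    ∃ δ > 0, ∀ (A : Type) [CStarAlgebra A] [PartialOrder A] [StarOrderedRing A] (a b : A),
      0 ≤ a → a ≤ 1 → ‖b‖ ≤ 1 → ‖a * b - b * a‖ < δ →
      ‖cfc Real.sqrt a * b - b * cfc Real.sqrt a‖ < η := by
  obtain ⟨p, hp⟩ := exists_polynomial_near_of_continuousOn 0 1 Real.sqrt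
    Real.continuous_sqrt.continuousOn (η / 4) (by positivity)
  set L := ∑ i ∈ range (p.natDegree + 1), |p.coeff i| * i with hLdef
  have hL : 0 ≤ L := Finset.sum_nonneg fun i _ => by positivity
  refine ⟨η / (2 * (L + 1)), by positivity, ?_⟩
  intro A _ _ _ a b ha0 ha1 hb hab
  rcases subsingleton_or_nontrivial A with hA | hA
  · simpa [Subsingleton.elim (cfc Real.sqrt a * b - b * cfc Real.sqrt a) 0] using hη
  have hsa : IsSelfAdjoint a := .of_nonneg ha0
  have hna : ‖a‖ ≤ 1 := (CStarAlgebra.norm_le_one_iff_of_nonneg a ha0).mpr ha1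
  have hspec : ∀ x ∈ spectrum ℝ a, x ∈ Set.Icc (0:ℝ) 1 := by
    intro x hx
    refine ⟨spectrum_nonneg_of_nonneg ha0 hx, ?_⟩
    calc x ≤ |x| := le_abs_self x
      _ = ‖x‖ := (Real.norm_eq_abs x).symm
      _ ≤ ‖a‖ := spectrum.norm_le_norm_of_mem hx
      _ ≤ 1 := hna
  have happrox : ‖cfc Real.sqrt a - (aeval a) p‖ ≤ η / 4 := by
    have h1 : cfc (fun x => Real.sqrt x - p.eval x) a = cfc Real.sqrt a - (aeval a) p := by
      rw [cfc_sub Real.sqrt (fun x => p.eval x) a (by fun_prop) (by fun_prop),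
        cfc_polynomial p a hsa]
    rw [← h1]
    refine norm_cfc_le (by positivity) fun x hx => ?_
    rw [Real.norm_eq_abs, abs_sub_comm]
    exact (hp x (hspec x hx)).le
  have key : cfc Real.sqrt a * b - b * cfc Real.sqrt a
      = ((cfc Real.sqrt a - aeval a p) * b - b * (cfc Real.sqrt a - aeval a p))
        + (aeval a p * b - b * aeval a p) := by noncomm_ring
  have h2 : ‖(cfc Real.sqrt a - aeval a p) * b - b * (cfc Real.sqrt a - aeval a p)‖
      ≤ η / 4 + η / 4 := by
    refine (norm_sub_le _ _).trans (add_le_add ?_ ?_)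
    · exact (norm_mul_le _ _).trans <| by
        calc ‖cfc Real.sqrt a - aeval a p‖ * ‖b‖ ≤ (η/4) * 1 :=
          mul_le_mul happrox hb (norm_nonneg _) (by positivity)
        _ = η / 4 := by ring
    · exact (norm_mul_le _ _).trans <| by
        calc ‖b‖ * ‖cfc Real.sqrt a - aeval a p‖ ≤ 1 * (η/4) :=
          mul_le_mul hb happrox (norm_nonneg _) (by norm_num)
        _ = η / 4 := by ring
  have h3 : ‖aeval a p * b - b * aeval a p‖ ≤ L * ‖a * b - b * a‖ :=
    comm_aeval_bound p a b hna
  have h4 : L * ‖a * b - b * a‖ ≤ L * (η / (2 * (L + 1))) :=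
    mul_le_mul_of_nonneg_left hab.le hL
  have h5 : L * (η / (2 * (L + 1))) < η / 2 := by
    have hL1 : (0:ℝ) < L + 1 := by linarith
    have key2 : L * η < (L + 1) * η := by nlinarith
    calc L * (η / (2 * (L + 1))) = (L * η) / (2 * (L + 1)) := by ring
      _ < ((L + 1) * η) / (2 * (L + 1)) := (div_lt_div_iff_of_pos_right (by positivity)).mpr key2
      _ = η / 2 := by field_simp
  calc ‖cfc Real.sqrt a * b - b * cfc Real.sqrt a‖
      ≤ ‖(cfc Real.sqrt a - aeval a p) * b - b * (cfc Real.sqrt a - aeval a p)‖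
        + ‖aeval a p * b - b * aeval a p‖ := by rw [key]; exact norm_add_le _ _
    _ < η := by linarith

theorem stmt_13 (ε : ℝ) (hε : 0 < ε) :
    ∃ δ > 0, ∀ (A : Type) [CStarAlgebra A] [PartialOrder A] [StarOrderedRing A]
      (z z₀ c g₀ g₁ : A),
      0 ≤ g₁ → g₁ ≤ g₀ → g₀ ≤ 1 → g₀ * g₁ = g₁ →
      ‖z‖ ≤ 1 → ‖z₀‖ ≤ 1 → ‖c‖ ≤ 1 →
      ‖c * g₀ - g₀ * c‖ < δ → ‖c * g₁ - g₁ * c‖ < δ →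
      ‖z₀ * ((1 - g₁) * c) - (1 - g₁) * c * z₀‖ < δ →
      ‖z₀ * g₀ - g₀ * z₀‖ < δ →
      ‖z - cfc Real.sqrt (1 - g₀) * z₀ * cfc Real.sqrt (1 - g₀)‖ < δ →
      ‖z * c - c * z‖ < ε := by
  obtain ⟨δ₁, hδ₁, hsqrt⟩ := sqrt_comm_bound (ε / 8) (by positivity)
  refine ⟨min δ₁ (ε / 16), lt_min hδ₁ (by positivity), ?_⟩
  intro A _ _ _ z z₀ c g₀ g₁ hg₁0 hg₁g₀ hg₀1 hgg hz hz₀ hc h4 h5 h6 h7 h8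
  rcases subsingleton_or_nontrivial A with hA | hA
  · simpa [Subsingleton.elim (z * c - c * z) 0] using hε
  have hδε : min δ₁ (ε / 16) ≤ ε / 16 := min_le_right _ _
  have hδδ₁ : min δ₁ (ε / 16) ≤ δ₁ := min_le_left _ _
  set s := cfc Real.sqrt (1 - g₀) with hs
  have hg₀0 : (0 : A) ≤ g₀ := hg₁0.trans hg₁g₀
  have h10 : (0 : A) ≤ 1 - g₀ := sub_nonneg.mpr hg₀1
  have h11 : (1 : A) - g₀ ≤ 1 := by
    have := sub_le_self (1 : A) hg₀0
    simpa using this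
  -- commutator of s with c
  have hcomm1 : ‖(1 - g₀) * c - c * (1 - g₀)‖ < δ₁ := by
    have : (1 - g₀) * c - c * (1 - g₀) = c * g₀ - g₀ * c := by noncomm_ring
    rw [this]; exact lt_of_lt_of_le h4 hδδ₁
  have hsc : ‖s * c - c * s‖ < ε / 8 := hsqrt A (1 - g₀) c h10 h11 hc hcomm1
  -- norm of s
  have hspec : ∀ x ∈ spectrum ℝ (1 - g₀), x ∈ Set.Icc (0:ℝ) 1 := by
    intro x hx
    refine ⟨spectrum_nonneg_of_nonneg h10 hx, ?_⟩
    calc x ≤ |x| := le_abs_self x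
      _ = ‖x‖ := (Real.norm_eq_abs x).symm
      _ ≤ ‖1 - g₀‖ := spectrum.norm_le_norm_of_mem hx
      _ ≤ 1 := (CStarAlgebra.norm_le_one_iff_of_nonneg _ h10).mpr h11
  have hsnorm : ‖s‖ ≤ 1 := by
    refine norm_cfc_le zero_le_one fun x hx => ?_
    obtain ⟨hx0, hx1⟩ := hspec x hx
    rw [Real.norm_eq_abs, abs_of_nonneg (Real.sqrt_nonneg x)]
    exact Real.sqrt_le_one.mpr hx1
  -- s is selfadjoint and s * s = 1 - g₀
  have hsa_s : IsSelfAdjoint s := cfc_predicate Real.sqrt (1 - g₀)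
  have hss : s * s = 1 - g₀ := by
    rw [hs, ← cfc_mul Real.sqrt Real.sqrt (1 - g₀)]
    have : cfc (fun x => Real.sqrt x * Real.sqrt x) (1 - g₀) = cfc (fun x : ℝ => x) (1 - g₀) := by
      refine cfc_congr fun x hx => ?_
      exact Real.mul_self_sqrt (hspec x hx).1
    rw [this, cfc_id' ℝ (1 - g₀)]
  -- annihilation relations
  have hOg : (1 - g₀) * g₁ = 0 := by rw [sub_mul, one_mul, hgg, sub_self]
  have hsg₁ : s * g₁ = 0 := by
    have hg₁sa : IsSelfAdjoint g₁ := .of_nonneg hg₁0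
    have : star (s * g₁) * (s * g₁) = 0 := by
      rw [star_mul, hsa_s.star_eq, hg₁sa.star_eq]
      calc g₁ * s * (s * g₁) = g₁ * ((s * s) * g₁) := by noncomm_ring
        _ = g₁ * ((1 - g₀) * g₁) := by rw [hss]
        _ = 0 := by rw [hOg, mul_zero]
    exact (CStarRing.star_mul_self_eq_zero_iff _).mp this
  have hg₁s : g₁ * s = 0 := by
    have := congrArg star hsg₁
    rwa [star_mul, hsa_s.star_eq, (IsSelfAdjoint.of_nonneg hg₁0).star_eq, star_zero] at this
  have hA : ∀ x : A, g₁ * (s * x) = 0 := fun x => by rw [← mul_assoc, hg₁s, zero_mul]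
  have hB : ∀ x : A, s * (g₁ * x) = 0 := fun x => by rw [← mul_assoc, hsg₁, zero_mul]
  -- the key algebraic identity
  have key : s * z₀ * s * c - c * (s * z₀ * s)
      = s * z₀ * (s * c - c * s)
      + s * z₀ * (g₁ * c - c * g₁) * s
      + s * (z₀ * ((1 - g₁) * c) - (1 - g₁) * c * z₀) * s
      + (s * c - c * s) * z₀ * s := by
    simp only [mul_sub, sub_mul, mul_add, add_mul, mul_one, one_mul, mul_assoc,
      hA, hB, hsg₁, hg₁s, mul_zero, zero_mul, sub_zero, zero_sub, add_zero, zero_add]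
    abel
  -- norm bounds
  have hsz : ‖s * z₀‖ ≤ 1 := (norm_mul_le _ _).trans (mul_le_one₀ hsnorm (norm_nonneg _) hz₀)
  have n1 : ‖s * z₀ * (s * c - c * s)‖ < ε / 8 :=
    lt_of_le_of_lt ((norm_mul_le _ _).trans (by
      calc ‖s * z₀‖ * ‖s * c - c * s‖ ≤ 1 * ‖s * c - c * s‖ :=
        mul_le_mul_of_nonneg_right hsz (norm_nonneg _)
      _ = ‖s * c - c * s‖ := one_mul _)) hsc
  have n4 : ‖(s * c - c * s) * z₀ * s‖ < ε / 8 := by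
    have : ‖(s * c - c * s) * z₀ * s‖ ≤ ‖s * c - c * s‖ * ‖z₀‖ * ‖s‖ :=
      (norm_mul_le _ _).trans (mul_le_mul_of_nonneg_right (norm_mul_le _ _) (norm_nonneg _))
    refine lt_of_le_of_lt (this.trans ?_) hsc
    calc ‖s * c - c * s‖ * ‖z₀‖ * ‖s‖ ≤ ‖s * c - c * s‖ * 1 * 1 := by
          apply mul_le_mul (mul_le_mul_of_nonneg_left hz₀ (norm_nonneg _)) hsnorm
            (norm_nonneg _) (by positivity)
      _ = ‖s * c - c * s‖ := by ring
  have middle_bound : ∀ x : A, ‖x‖ < min δ₁ (ε / 16) → ‖s * z₀ * x * s‖ < ε / 16 := by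
    intro x hx
    have : ‖s * z₀ * x * s‖ ≤ ‖s * z₀‖ * ‖x‖ * ‖s‖ :=
      (norm_mul_le _ _).trans (mul_le_mul_of_nonneg_right (norm_mul_le _ _) (norm_nonneg _))
    refine lt_of_le_of_lt this ?_
    calc ‖s * z₀‖ * ‖x‖ * ‖s‖ ≤ 1 * ‖x‖ * 1 := by
          apply mul_le_mul (mul_le_mul_of_nonneg_right hsz (norm_nonneg _)) hsnorm
            (norm_nonneg _) (by positivity)
      _ = ‖x‖ := by ring
      _ < min δ₁ (ε / 16) := hx
      _ ≤ ε / 16 := hδε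
  have n2 : ‖s * z₀ * (g₁ * c - c * g₁) * s‖ < ε / 16 := by
    apply middle_bound
    rwa [norm_sub_rev]
  have n3 : ‖s * (z₀ * ((1 - g₁) * c) - (1 - g₁) * c * z₀) * s‖ < ε / 16 := by
    have : ‖s * (z₀ * ((1 - g₁) * c) - (1 - g₁) * c * z₀) * s‖
        ≤ ‖s‖ * ‖z₀ * ((1 - g₁) * c) - (1 - g₁) * c * z₀‖ * ‖s‖ :=
      (norm_mul_le _ _).trans (mul_le_mul_of_nonneg_right (norm_mul_le _ _) (norm_nonneg _))
    refine lt_of_le_of_lt this ?_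
    calc ‖s‖ * ‖z₀ * ((1 - g₁) * c) - (1 - g₁) * c * z₀‖ * ‖s‖
        ≤ 1 * ‖z₀ * ((1 - g₁) * c) - (1 - g₁) * c * z₀‖ * 1 := by
          apply mul_le_mul (mul_le_mul_of_nonneg_right hsnorm (norm_nonneg _)) hsnorm
            (norm_nonneg _) (by positivity)
      _ = ‖z₀ * ((1 - g₁) * c) - (1 - g₁) * c * z₀‖ := by ring
      _ < min δ₁ (ε / 16) := h6
      _ ≤ ε / 16 := hδε
  have nw : ‖s * z₀ * s * c - c * (s * z₀ * s)‖ < ε / 8 + ε / 16 + ε / 16 + ε / 8 := by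
    rw [key]
    calc ‖_ + _ + _ + _‖ ≤ ‖s * z₀ * (s * c - c * s)
          + s * z₀ * (g₁ * c - c * g₁) * s
          + s * (z₀ * ((1 - g₁) * c) - (1 - g₁) * c * z₀) * s‖
          + ‖(s * c - c * s) * z₀ * s‖ := norm_add_le _ _
      _ ≤ ‖s * z₀ * (s * c - c * s) + s * z₀ * (g₁ * c - c * g₁) * s‖
          + ‖s * (z₀ * ((1 - g₁) * c) - (1 - g₁) * c * z₀) * s‖
          + ‖(s * c - c * s) * z₀ * s‖ := by gcongr; exact norm_add_le _ _
      _ ≤ ‖s * z₀ * (s * c - c * s)‖ + ‖s * z₀ * (g₁ * c - c * g₁) * s‖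
          + ‖s * (z₀ * ((1 - g₁) * c) - (1 - g₁) * c * z₀) * s‖
          + ‖(s * c - c * s) * z₀ * s‖ := by gcongr; exact norm_add_le _ _
      _ < ε / 8 + ε / 16 + ε / 16 + ε / 8 := by
          exact add_lt_add (add_lt_add (add_lt_add n1 n2) n3) n4
  -- final assembly
  have split : z * c - c * z
      = (z - s * z₀ * s) * c + (s * z₀ * s * c - c * (s * z₀ * s)) + c * (s * z₀ * s - z) := by
    noncomm_ring
  have e1 : ‖(z - s * z₀ * s) * c‖ < ε / 16 := by
    refine lt_of_le_of_lt ((norm_mul_le _ _).trans ?_) (lt_of_lt_of_le h8 hδε)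
    calc ‖z - s * z₀ * s‖ * ‖c‖ ≤ ‖z - s * z₀ * s‖ * 1 :=
          mul_le_mul_of_nonneg_left hc (norm_nonneg _)
      _ = ‖z - s * z₀ * s‖ := mul_one _
  have e2 : ‖c * (s * z₀ * s - z)‖ < ε / 16 := by
    have : ‖c * (s * z₀ * s - z)‖ ≤ ‖c‖ * ‖s * z₀ * s - z‖ := norm_mul_le _ _
    refine lt_of_le_of_lt this ?_
    calc ‖c‖ * ‖s * z₀ * s - z‖ ≤ 1 * ‖s * z₀ * s - z‖ :=
          mul_le_mul_of_nonneg_right hc (norm_nonneg _)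
      _ = ‖z - s * z₀ * s‖ := by rw [one_mul, norm_sub_rev]
      _ < min δ₁ (ε / 16) := h8
      _ ≤ ε / 16 := hδε
  calc ‖z * c - c * z‖
      ≤ ‖(z - s * z₀ * s) * c‖ + ‖s * z₀ * s * c - c * (s * z₀ * s)‖
        + ‖c * (s * z₀ * s - z)‖ := by
        rw [split]; exact (norm_add_le _ _).trans (by gcongr; exact norm_add_le _ _)
    _ < ε / 16 + (ε / 8 + ε / 16 + ε / 16 + ε / 8) + ε / 16 :=
        add_lt_add (add_lt_add e1 nw) e2
    _ < ε := by linarith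
end

section
/- For every ε > 0 there exists δ > 0 such that whenever A is a C*-algebra and a, x ∈ A satisfy ‖a‖ ≤ 1, 0 ≤ x, ‖x‖ ≤ 1, and ‖x a − a x‖ < δ, then ‖x^{1/2} a − a x^{1/2}‖ < ε. -/
/-!
Commutation with `a` is a derivation, so for `‖x‖ ≤ 1` the commutator of `xⁿ` with `a` has norm at
most `n ‖x a - a x‖`, and that of `q(x)` for a polynomial `q` at most `∑ |qₙ| n ‖x a - a x‖`.
Approximate `√` uniformly on `[0, 1] ⊇ σ(x)` within `ε / 4` by a polynomial `q` with `q(0) = 0`: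
the error term contributes at most `ε / 2` to the commutator, and `q(x)` contributes less than
`ε / 2` once `‖x a - a x‖` is small compared with `∑ |qₙ| n`.
-/

open Polynomial Set

lemma norm_mul_sub_mul_le_two_mul {A : Type*} [NonUnitalNormedRing A] (b a : A) :
    ‖b * a - a * b‖ ≤ 2 * ‖b‖ * ‖a‖ :=
  calc ‖b * a - a * b‖ ≤ ‖b‖ * ‖a‖ + ‖a‖ * ‖b‖ :=
        (norm_sub_le _ _).trans (add_le_add (norm_mul_le _ _) (norm_mul_le _ _))
    _ = 2 * ‖b‖ * ‖a‖ := by ring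

lemma norm_mul_mul_sub_mul_mul_le {A : Type*} [NonUnitalNormedRing A] (x y a : A) :
    ‖x * y * a - a * (x * y)‖ ≤ ‖x‖ * ‖y * a - a * y‖ + ‖x * a - a * x‖ * ‖y‖ := by
  have hleibniz : x * y * a - a * (x * y) = x * (y * a - a * y) + (x * a - a * x) * y := by
    noncomm_ring
  rw [hleibniz]
  exact (norm_add_le _ _).trans (add_le_add (norm_mul_le _ _) (norm_mul_le _ _))

theorem Polynomial.exists_eval_zero_eq_zero_near_of_continuousOn {a b : ℝ} (hab : 0 ∈ Icc a b)
    (f : ℝ → ℝ) (hf : ContinuousOn f (Icc a b)) (hf0 : f 0 = 0) {ε : ℝ} (hε : 0 < ε) :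
    ∃ p : ℝ[X], p.eval 0 = 0 ∧ ∀ t ∈ Icc a b, |p.eval t - f t| < ε := by
  obtain ⟨q, hq⟩ := exists_polynomial_near_of_continuousOn a b f hf (ε / 2) (half_pos hε)
  refine ⟨q - C (q.eval 0), by simp, fun t ht => ?_⟩
  have h0 := hq 0 hab
  rw [hf0, sub_zero] at h0
  calc |(q - C (q.eval 0)).eval t - f t| = |(q.eval t - f t) - q.eval 0| := by
        rw [eval_sub, eval_C, sub_right_comm]
    _ ≤ |q.eval t - f t| + |q.eval 0| := abs_sub _ _
    _ < ε / 2 + ε / 2 := add_lt_add (hq t ht) h0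
    _ = ε := add_halves ε

section CStarAlgebra

variable {A : Type*} [NonUnitalCStarAlgebra A]

lemma cfcₙ_pow_add_two (x : A) (hx : IsSelfAdjoint x) (n : ℕ) :
    cfcₙ (· ^ (n + 2) : ℝ → ℝ) x = x * cfcₙ (· ^ (n + 1) : ℝ → ℝ) x := by
  have hmul := cfcₙ_mul (fun t : ℝ => t) (fun t : ℝ => t ^ (n + 1)) x
  rw [cfcₙ_id' ℝ x] at hmul
  simpa only [← pow_succ'] using hmul

lemma cfcₙ_eval_eq_sum (p : ℝ[X]) (hp : p.eval 0 = 0) (x : A) :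
    cfcₙ p.eval x = ∑ n ∈ Finset.range (p.natDegree + 1), p.coeff n • cfcₙ (· ^ n : ℝ → ℝ) x := by
  have hcoeff : p.coeff 0 = 0 := by rwa [coeff_zero_eq_eval_zero]
  have hmonomial_zero : ∀ n, p.coeff n * (0 : ℝ) ^ n = 0 := fun
    | 0 => by simp [hcoeff]
    | n + 1 => by simp
  have hsum : p.eval = ∑ n ∈ Finset.range (p.natDegree + 1), fun t : ℝ => p.coeff n * t ^ n := by
    ext t
    simp [eval_eq_sum_range]
  rw [hsum, cfcₙ_sum _ x _ (fun _ _ => by fun_prop) (fun n _ => hmonomial_zero n)]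
  refine Finset.sum_congr rfl fun n _ => ?_
  rcases n with _ | n
  · simp [hcoeff]
  · exact cfcₙ_const_mul _ _ x

end CStarAlgebra

section CStarAlgebraOrder

variable {A : Type*} [NonUnitalCStarAlgebra A] [PartialOrder A] [StarOrderedRing A]

lemma quasispectrum_subset_Icc_of_nonneg_of_norm_le_one {x : A} (hx : 0 ≤ x) (hx1 : ‖x‖ ≤ 1) :
    quasispectrum ℝ x ⊆ Icc 0 1 := fun t ht =>
  ⟨quasispectrum_nonneg_of_nonneg x hx t ht,
    (le_abs_self t).trans <|
      (NonUnitalIsometricContinuousFunctionalCalculus.norm_quasispectrum_le x ht).trans hx1⟩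

variable {x : A} (hx : 0 ≤ x) (hx1 : ‖x‖ ≤ 1)
include hx hx1

lemma norm_cfcₙ_pow_le_one (n : ℕ) : ‖cfcₙ (· ^ n : ℝ → ℝ) x‖ ≤ 1 :=
  norm_cfcₙ_le fun t ht => by
    obtain ⟨ht0, ht1⟩ := quasispectrum_subset_Icc_of_nonneg_of_norm_le_one hx hx1 ht
    rw [norm_pow, Real.norm_of_nonneg ht0]
    exact pow_le_one₀ ht0 ht1

lemma norm_cfcₙ_pow_mul_sub_mul_cfcₙ_pow_le (a : A) :
    ∀ n : ℕ, ‖cfcₙ (· ^ n : ℝ → ℝ) x * a - a * cfcₙ (· ^ n : ℝ → ℝ) x‖ ≤ n * ‖x * a - a * x‖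
  | 0 => by simp [cfcₙ_apply_of_not_map_zero x (f := fun _ : ℝ => (1 : ℝ)) one_ne_zero]
  | 1 => by simp [cfcₙ_id' ℝ x]
  | n + 2 => by
    rw [cfcₙ_pow_add_two x hx.isSelfAdjoint]
    calc _ ≤ ‖x‖ * ‖cfcₙ (· ^ (n + 1) : ℝ → ℝ) x * a - a * cfcₙ (· ^ (n + 1) : ℝ → ℝ) x‖
          + ‖x * a - a * x‖ * ‖cfcₙ (· ^ (n + 1) : ℝ → ℝ) x‖ := norm_mul_mul_sub_mul_mul_le _ _ _
      _ ≤ 1 * ((n + 1 : ℕ) * ‖x * a - a * x‖) + ‖x * a - a * x‖ * 1 := by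
        gcongr
        · exact norm_cfcₙ_pow_mul_sub_mul_cfcₙ_pow_le a (n + 1)
        · exact norm_cfcₙ_pow_le_one hx hx1 _
      _ = (n + 2 : ℕ) * ‖x * a - a * x‖ := by push_cast; ring

lemma norm_cfcₙ_eval_mul_sub_mul_cfcₙ_eval_le (p : ℝ[X]) (hp : p.eval 0 = 0) (a : A) :
    ‖cfcₙ p.eval x * a - a * cfcₙ p.eval x‖
      ≤ (∑ n ∈ Finset.range (p.natDegree + 1), |p.coeff n| * n) * ‖x * a - a * x‖ := by
  rw [cfcₙ_eval_eq_sum p hp, Finset.sum_mul, Finset.mul_sum, ← Finset.sum_sub_distrib,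
    Finset.sum_mul]
  refine (norm_sum_le _ _).trans (Finset.sum_le_sum fun n _ => ?_)
  rw [smul_mul_assoc, mul_smul_comm, ← smul_sub, norm_smul, Real.norm_eq_abs, mul_assoc]
  exact mul_le_mul_of_nonneg_left (norm_cfcₙ_pow_mul_sub_mul_cfcₙ_pow_le hx hx1 a n) (abs_nonneg _)

lemma norm_cfcₙ_mul_sub_mul_cfcₙ_le_of_approx {f : ℝ → ℝ} (hf : ContinuousOn f (Icc 0 1))
    (hf0 : f 0 = 0) {p : ℝ[X]} (hp : p.eval 0 = 0) {η : ℝ}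
    (hfp : ∀ t ∈ Icc (0 : ℝ) 1, |p.eval t - f t| ≤ η) {a : A} (ha : ‖a‖ ≤ 1) :
    ‖cfcₙ f x * a - a * cfcₙ f x‖
      ≤ 2 * η + (∑ n ∈ Finset.range (p.natDegree + 1), |p.coeff n| * n) * ‖x * a - a * x‖ := by
  have hspec := quasispectrum_subset_Icc_of_nonneg_of_norm_le_one hx hx1
  set r := cfcₙ (fun t => f t - p.eval t) x
  have hsplit : cfcₙ f x = r + cfcₙ p.eval x := by
    rw [show r = _ from cfcₙ_sub f p.eval x (hf.mono hspec)]
    abel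
  have hr : ‖r‖ ≤ η := norm_cfcₙ_le fun t ht => by
    rw [Real.norm_eq_abs, abs_sub_comm]
    exact hfp t (hspec ht)
  have hcomm : cfcₙ f x * a - a * cfcₙ f x
      = (r * a - a * r) + (cfcₙ p.eval x * a - a * cfcₙ p.eval x) := by
    rw [hsplit]
    noncomm_ring
  calc ‖cfcₙ f x * a - a * cfcₙ f x‖
      ≤ ‖r * a - a * r‖ + ‖cfcₙ p.eval x * a - a * cfcₙ p.eval x‖ := hcomm ▸ norm_add_le _ _
    _ ≤ 2 * ‖r‖ * ‖a‖ + _ :=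
      add_le_add (norm_mul_sub_mul_le_two_mul r a)
        (norm_cfcₙ_eval_mul_sub_mul_cfcₙ_eval_le hx hx1 p hp a)
    _ ≤ 2 * η * 1 + _ := by
      gcongr
      linarith [(norm_nonneg r).trans hr]
    _ = _ := by rw [mul_one]

end CStarAlgebraOrder

universe u

theorem exists_pos_forall_norm_cfcₙ_mul_sub_mul_cfcₙ_lt {f : ℝ → ℝ} (hf : ContinuousOn f (Icc 0 1))
    (hf0 : f 0 = 0) {ε : ℝ} (hε : 0 < ε) :
    ∃ δ > 0, ∀ (A : Type u) [NonUnitalCStarAlgebra A] [PartialOrder A] [StarOrderedRing A]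
      (a x : A), ‖a‖ ≤ 1 → 0 ≤ x → ‖x‖ ≤ 1 → ‖x * a - a * x‖ < δ →
      ‖cfcₙ f x * a - a * cfcₙ f x‖ < ε := by
  obtain ⟨p, hp, hfp⟩ := exists_eval_zero_eq_zero_near_of_continuousOn
    (by simp : (0 : ℝ) ∈ Icc 0 1) f hf hf0 (by positivity : 0 < ε / 4)
  set C := ∑ n ∈ Finset.range (p.natDegree + 1), |p.coeff n| * n
  have hC : 0 ≤ C := Finset.sum_nonneg fun n _ => by positivity
  refine ⟨ε / (2 * (C + 1)), by positivity, fun A _ _ _ a x ha hx hx1 hxa => ?_⟩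
  have hCδ : C * (ε / (2 * (C + 1))) < ε / 2 := by
    rw [← mul_div_assoc, div_lt_div_iff₀ (by positivity) two_pos]
    nlinarith
  calc ‖cfcₙ f x * a - a * cfcₙ f x‖ ≤ 2 * (ε / 4) + C * ‖x * a - a * x‖ :=
        norm_cfcₙ_mul_sub_mul_cfcₙ_le_of_approx hx hx1 hf hf0 hp (fun t ht => (hfp t ht).le) ha
    _ ≤ 2 * (ε / 4) + C * (ε / (2 * (C + 1))) := by gcongr
    _ < 2 * (ε / 4) + ε / 2 := by gcongr
    _ = ε := by ring

theorem stmt_14 (ε : ℝ) (hε : 0 < ε) :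
    ∃ δ > 0, ∀ (A : Type) [NonUnitalCStarAlgebra A] [PartialOrder A] [StarOrderedRing A]
      (a x : A),
      ‖a‖ ≤ 1 → 0 ≤ x → ‖x‖ ≤ 1 → ‖x * a - a * x‖ < δ →
      ‖cfcₙ Real.sqrt x * a - a * cfcₙ Real.sqrt x‖ < ε :=
  exists_pos_forall_norm_cfcₙ_mul_sub_mul_cfcₙ_lt Real.continuous_sqrt.continuousOn
    Real.sqrt_zero hε
end
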